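/- Let F : C → B and G : D → B be Galois coverings of k-categories, and let (H,J) be a morphism from F to G. Then H is surjective on objects. -/

import Mathlib

open CategoryTheory

universe w v u

section CoveringDefs

variable (k : Type w) [CommRing k]

/-- A functor between `k`-linear categories is `k`-linear:
it is additive and commutes with the scalar action on morphisms. -/
def IsLinearFunctor {C : Type u} [Category.{v} C] [Preadditive C] [CategoryTheory.Linear k C]
    {B : Type u} [Category.{v} B] [Preadditive B] [CategoryTheory.Linear k B]
    (F : C ⥤ B) : Prop :=
  (∀ (x y : C) (f g : x ⟶ y), F.map (f + g) = F.map f + F.map g) ∧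
  (∀ (x y : C) (r : k) (f : x ⟶ y), F.map (r • f) = r • F.map f)

variable {C : Type u} [Category.{v} C] [Preadditive C] [CategoryTheory.Linear k C]
variable {B : Type u} [Category.{v} B] [Preadditive B] [CategoryTheory.Linear k B]

/-- The canonical map `⊕_{y ∈ F⁻¹(c)} C(x,y) →+ B(F(x),c)` induced by `F`
on the source star. -/
noncomputable def starOutHom (F : C ⥤ B) (hF : IsLinearFunctor k F) (x : C) (c : B) :
    (DirectSum {y : C // F.obj y = c} (fun y => (x ⟶ y.1))) →+ (F.obj x ⟶ c) := by
  classical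
  exact DirectSum.toAddMonoid fun y =>
    AddMonoidHom.mk' (fun f => F.map f ≫ eqToHom y.2)
      (fun f g => by rw [hF.1 _ _ f g, Preadditive.add_comp])

/-- The canonical map `⊕_{y ∈ F⁻¹(c)} C(y,x) →+ B(c,F(x))` induced by `F`
on the target star. -/
noncomputable def starInHom (F : C ⥤ B) (hF : IsLinearFunctor k F) (x : C) (c : B) :
    (DirectSum {y : C // F.obj y = c} (fun y => (y.1 ⟶ x))) →+ (c ⟶ F.obj x) := by
  classical
  exact DirectSum.toAddMonoid fun y =>
    AddMonoidHom.mk' (fun f => eqToHom y.2.symm ≫ F.map f)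
      (fun f g => by rw [hF.1 _ _ f g, Preadditive.comp_add])

/-- `F : C ⥤ B` is a covering of `k`-categories: it is a `k`-linear functor,
surjective on objects, inducing bijections on all source and target stars. -/
def IsCovering (F : C ⥤ B) : Prop :=
  ∃ hF : IsLinearFunctor k F,
    Function.Surjective F.obj ∧
    (∀ (x : C) (c : B), Function.Bijective (starOutHom k F hF x c)) ∧
    (∀ (x : C) (c : B), Function.Bijective (starInHom k F hF x c))

end CoveringDefs

/-- A `k`-category is connected if the equivalence relation generated by
"there is a nonzero morphism from `x` to `y`" relates any two objects. -/
def IsConnectedKCat (C : Type u) [Category.{v} C] [Preadditive C] : Prop :=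
  ∀ x y : C, Relation.EqvGen (fun a b : C => ∃ f : a ⟶ b, f ≠ 0) x y

section GaloisDefs

variable (k : Type w) [CommRing k]
variable {C : Type u} [Category.{v} C] [Preadditive C] [CategoryTheory.Linear k C]
variable {B : Type u} [Category.{v} B] [Preadditive B] [CategoryTheory.Linear k B]
variable {D : Type u} [Category.{v} D] [Preadditive D] [CategoryTheory.Linear k D]

/-- `H` belongs to `Aut₁ F`: it is an invertible `k`-linear endofunctor with `F ∘ H = F`. -/
def MemAut1 (F : C ⥤ B) (H : C ⥤ C) : Prop :=
  IsLinearFunctor k H ∧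
  (∃ Hinv : C ⥤ C, H ⋙ Hinv = 𝟭 C ∧ Hinv ⋙ H = 𝟭 C) ∧
  H ⋙ F = F

/-- A covering is Galois if its source is connected and `Aut₁ F` acts transitively
on some fibre. -/
def IsGaloisCovering (F : C ⥤ B) : Prop :=
  IsCovering k F ∧ IsConnectedKCat C ∧
  ∃ b₀ : B, ∀ x y : C, F.obj x = b₀ → F.obj y = b₀ →
    ∃ H : C ⥤ C, MemAut1 k F H ∧ H.obj x = y

/-- A morphism `(H, J)` of coverings from `F : C ⥤ B` to `G : D ⥤ B`:
`H` and `J` are `k`-linear, `J` is an isomorphism which is the identity on objects,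
and `G ∘ H = J ∘ F`. -/
def IsCoveringMorphism (F : C ⥤ B) (G : D ⥤ B) (H : C ⥤ D) (J : B ⥤ B) : Prop :=
  IsLinearFunctor k H ∧ IsLinearFunctor k J ∧
  (∃ Jinv : B ⥤ B, J ⋙ Jinv = 𝟭 B ∧ Jinv ⋙ J = 𝟭 B) ∧
  (∀ b : B, J.obj b = b) ∧
  H ⋙ G = F ⋙ J

end GaloisDefs

/-- A universal covering: a Galois covering `U` such that for every Galois covering
`F : C ⥤ B` and every pair of objects `u₀`, `c₀` above the same object of `B`,
there is a unique `k`-linear functor `H` with `F ∘ H = U` and `H u₀ = c₀`. -/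
def IsUniversalCovering (k : Type w) [CommRing k]
    {U' : Type u} [Category.{v} U'] [Preadditive U'] [CategoryTheory.Linear k U']
    {B : Type u} [Category.{v} B] [Preadditive B] [CategoryTheory.Linear k B]
    (U : U' ⥤ B) : Prop :=
  IsGaloisCovering k U ∧
  ∀ (C : Type u) [Category.{v} C] [Preadditive C] [CategoryTheory.Linear k C]
    (F : C ⥤ B), IsGaloisCovering k F →
    ∀ (u₀ : U') (c₀ : C), U.obj u₀ = F.obj c₀ →
      ∃! H : U' ⥤ C, IsLinearFunctor k H ∧ H ⋙ F = U ∧ H.obj u₀ = c₀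

/-- Given a functor `F : C ⥤ B`, a choice `x` of objects of `C` above each object of `B`,
and an endofunctor `H` of `C`, the subset `Z_H(c,b) = F(C(x_b, H x_c))` of `B(b,c)`. -/
def gradeSet {C : Type u} [Category.{v} C] {B : Type u} [Category.{v} B]
    (F : C ⥤ B) (x : B → C) (H : C ⥤ C) (b c : B) : Set (b ⟶ c) :=
  {g | ∃ (h₁ : b = F.obj (x b)) (h₂ : F.obj (H.obj (x c)) = c)
        (f : x b ⟶ H.obj (x c)), g = eqToHom h₁ ≫ F.map f ≫ eqToHom h₂}

/-- The homogeneous component `Z_H(c,b)` as a `k`-submodule of `B(b,c)`. -/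
noncomputable def gradeSubmodule (k : Type w) [CommRing k]
    {C : Type u} [Category.{v} C]
    {B : Type u} [Category.{v} B] [Preadditive B] [CategoryTheory.Linear k B]
    (F : C ⥤ B) (x : B → C) (H : C ⥤ C) (b c : B) : Submodule k (b ⟶ c) :=
  Submodule.span k (gradeSet F x H b c)

/-! The image of `H` is closed under nonzero morphisms. Since `G ∘ H = J ∘ F`, `H` maps the star
of `F` at `x` above `b` to the star of `G` at `H x` above `J b`; this map is onto, because the
stars of `F` are onto, `J` is full and the stars of `G` are bijective. Its image only has
components at objects `H y`, so every morphism of `D` out of or into `H x` whose other end is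
not of this form vanishes. As `D` is connected and `H` has nonempty image, `H` is surjective. -/

open DirectSum

theorem DirectSum.eq_zero_of_surjective_of_notMem_range {ι κ : Type*} [DecidableEq ι]
    [DecidableEq κ] {M : ι → Type*} {N : κ → Type*} [∀ i, AddCommMonoid (M i)]
    [∀ j, AddCommMonoid (N j)] (φ : ι → κ) (ψ : ∀ i, M i →+ N (φ i))
    (hsurj : Function.Surjective (toAddMonoid fun i => (of N (φ i)).comp (ψ i)))
    {j : κ} (hj : j ∉ Set.range φ) (y : N j) : y = 0 := by
  have hvanish : ∀ m, (toAddMonoid (fun i => (of N (φ i)).comp (ψ i)) m) j = 0 := by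
    intro m
    induction m using DirectSum.induction_on with
    | zero => simp
    | of i x =>
        simpa using of_eq_of_ne _ _ _ fun h => hj ⟨i, h.symm⟩
    | add m m' hm hm' => simp [hm, hm']
  obtain ⟨m, hm⟩ := hsurj (of N j y)
  simpa [hm] using hvanish m

theorem IsLinearFunctor.additive {k : Type w} [CommRing k]
    {C : Type u} [Category.{v} C] [Preadditive C] [CategoryTheory.Linear k C]
    {B : Type u} [Category.{v} B] [Preadditive B] [CategoryTheory.Linear k B]
    {F : C ⥤ B} (hF : IsLinearFunctor k F) : F.Additive :=
  ⟨hF.1 _ _ _ _⟩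

theorem CategoryTheory.Functor.full_of_comp_eq_id {A B : Type*} [Category A] [Category B]
    {J : A ⥤ B} {Jinv : B ⥤ A} (h₁ : J ⋙ Jinv = 𝟭 A) (h₂ : Jinv ⋙ J = 𝟭 B) : J.Full :=
  (CategoryTheory.Equivalence.mk J Jinv (eqToIso h₁.symm) (eqToIso h₂)).full_functor

theorem IsConnectedKCat.mem_of_mem {D : Type u} [Category.{v} D] [Preadditive D]
    (hD : IsConnectedKCat D) {S : Set D}
    (hS : ∀ ⦃a b : D⦄ (f : a ⟶ b), f ≠ 0 → (a ∈ S ↔ b ∈ S)) {a : D} (ha : a ∈ S) (b : D) :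
    b ∈ S := by
  suffices ∀ a b, Relation.EqvGen (fun a b : D => ∃ f : a ⟶ b, f ≠ 0) a b → (a ∈ S ↔ b ∈ S) from
    (this a b (hD a b)).1 ha
  intro a b hab
  induction hab with
  | rel a b hab => exact hS hab.choose hab.choose_spec
  | refl => exact Iff.rfl
  | symm _ _ _ ih => exact ih.symm
  | trans _ _ _ _ _ ih₁ ih₂ => exact ih₁.trans ih₂

section Push

variable {C D B : Type*} [Category C] [Preadditive C] [Category D] [Preadditive D] [Category B]
variable {F : C ⥤ B} {G : D ⥤ B} {H : C ⥤ D} {J : B ⥤ B}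

abbrev fibreMap (hcomm : H ⋙ G = F ⋙ J) {b : B} (y : {y : C // F.obj y = b}) :
    {z : D // G.obj z = J.obj b} :=
  ⟨H.obj y.1, by rw [← Functor.comp_obj, hcomm, Functor.comp_obj, y.2]⟩

variable [H.Additive]

open scoped Classical in
noncomputable def starOutPush (hcomm : H ⋙ G = F ⋙ J) (x : C) (b : B) :
    (⨁ y : {y : C // F.obj y = b}, x ⟶ y.1) →+
      ⨁ z : {z : D // G.obj z = J.obj b}, H.obj x ⟶ z.1 :=
  toAddMonoid fun y => (of _ (fibreMap hcomm y)).comp H.mapAddHom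

open scoped Classical in
noncomputable def starInPush (hcomm : H ⋙ G = F ⋙ J) (x : C) (b : B) :
    (⨁ y : {y : C // F.obj y = b}, y.1 ⟶ x) →+
      ⨁ z : {z : D // G.obj z = J.obj b}, z.1 ⟶ H.obj x :=
  toAddMonoid fun y => (of _ (fibreMap hcomm y)).comp H.mapAddHom

open scoped Classical in
theorem starOutPush_of (hcomm : H ⋙ G = F ⋙ J) (x : C) (b : B)
    (y : {y : C // F.obj y = b}) (f : x ⟶ y.1) :
    starOutPush hcomm x b (of (fun y : {y : C // F.obj y = b} => x ⟶ y.1) y f) =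
      of (fun z : {z : D // G.obj z = J.obj b} => H.obj x ⟶ z.1) (fibreMap hcomm y) (H.map f) :=
  toAddMonoid_of _ _ _

open scoped Classical in
theorem starInPush_of (hcomm : H ⋙ G = F ⋙ J) (x : C) (b : B)
    (y : {y : C // F.obj y = b}) (f : y.1 ⟶ x) :
    starInPush hcomm x b (of (fun y : {y : C // F.obj y = b} => y.1 ⟶ x) y f) =
      of (fun z : {z : D // G.obj z = J.obj b} => z.1 ⟶ H.obj x) (fibreMap hcomm y) (H.map f) :=
  toAddMonoid_of _ _ _

end Push

section Stars

variable {k : Type w} [CommRing k]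
variable {C : Type u} [Category.{v} C] [Preadditive C] [CategoryTheory.Linear k C]
variable {B : Type u} [Category.{v} B] [Preadditive B] [CategoryTheory.Linear k B]
variable {D : Type u} [Category.{v} D] [Preadditive D] [CategoryTheory.Linear k D]

open scoped Classical in
theorem starOutHom_of (F : C ⥤ B) (hF : IsLinearFunctor k F) (x : C) (c : B)
    (y : {y : C // F.obj y = c}) (f : x ⟶ y.1) :
    starOutHom k F hF x c (of (fun y : {y : C // F.obj y = c} => (x ⟶ y.1)) y f) =
      F.map f ≫ eqToHom y.2 :=
  toAddMonoid_of _ _ _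

open scoped Classical in
theorem starInHom_of (F : C ⥤ B) (hF : IsLinearFunctor k F) (x : C) (c : B)
    (y : {y : C // F.obj y = c}) (f : y.1 ⟶ x) :
    starInHom k F hF x c (of (fun y : {y : C // F.obj y = c} => (y.1 ⟶ x)) y f) =
      eqToHom y.2.symm ≫ F.map f :=
  toAddMonoid_of _ _ _

variable {F : C ⥤ B} {G : D ⥤ B} {H : C ⥤ D} {J : B ⥤ B} [H.Additive] [J.Additive]

theorem starOutHom_starOutPush (hF : IsLinearFunctor k F) (hG : IsLinearFunctor k G)
    (hcomm : H ⋙ G = F ⋙ J) (x : C) (b : B) (s : ⨁ y : {y : C // F.obj y = b}, x ⟶ y.1) :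
    starOutHom k G hG (H.obj x) (J.obj b) (starOutPush hcomm x b s) =
      eqToHom (Functor.congr_obj hcomm x) ≫ J.map (starOutHom k F hF x b s) := by
  classical
  induction s using DirectSum.induction_on with
  | zero => simp
  | of y f =>
      have hf : G.map (H.map f) = _ := Functor.congr_hom hcomm f
      rw [starOutPush_of, starOutHom_of, starOutHom_of, hf]
      simp [eqToHom_map]
  | add s s' hs hs' => simp [hs, hs']

theorem starInHom_starInPush (hF : IsLinearFunctor k F) (hG : IsLinearFunctor k G)
    (hcomm : H ⋙ G = F ⋙ J) (x : C) (b : B) (s : ⨁ y : {y : C // F.obj y = b}, y.1 ⟶ x) :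
    starInHom k G hG (H.obj x) (J.obj b) (starInPush hcomm x b s) =
      J.map (starInHom k F hF x b s) ≫ eqToHom (Functor.congr_obj hcomm x).symm := by
  classical
  induction s using DirectSum.induction_on with
  | zero => simp
  | of y f =>
      have hf : G.map (H.map f) = _ := Functor.congr_hom hcomm f
      rw [starInPush_of, starInHom_of, starInHom_of, hf]
      simp [eqToHom_map]
  | add s s' hs hs' => simp [hs, hs']

variable [J.Full]

theorem starOutPush_surjective (hF : IsCovering k F) (hG : IsCovering k G)
    (hcomm : H ⋙ G = F ⋙ J) (x : C) (b : B) : Function.Surjective (starOutPush hcomm x b) := by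
  refine (Function.Surjective.of_comp_iff' (hG.snd.2.1 (H.obj x) (J.obj b)) _).1 fun g => ?_
  obtain ⟨g', hg'⟩ := J.map_surjective (eqToHom (Functor.congr_obj hcomm x).symm ≫ g)
  obtain ⟨s, hs⟩ := (hF.snd.2.1 x b).2 g'
  exact ⟨s, by simp [starOutHom_starOutPush hF.fst, hs, hg']⟩

theorem starInPush_surjective (hF : IsCovering k F) (hG : IsCovering k G)
    (hcomm : H ⋙ G = F ⋙ J) (x : C) (b : B) : Function.Surjective (starInPush hcomm x b) := by
  refine (Function.Surjective.of_comp_iff' (hG.snd.2.2 (H.obj x) (J.obj b)) _).1 fun g => ?_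
  obtain ⟨g', hg'⟩ := J.map_surjective (g ≫ eqToHom (Functor.congr_obj hcomm x))
  obtain ⟨s, hs⟩ := (hF.snd.2.2 x b).2 g'
  exact ⟨s, by simp [starInHom_starInPush hF.fst, hs, hg']⟩

theorem hom_eq_zero_of_notMem_range_out (hF : IsCovering k F) (hG : IsCovering k G)
    (hcomm : H ⋙ G = F ⋙ J) (x : C) {z : D} (hz : z ∉ Set.range H.obj) {b : B}
    (hb : G.obj z = J.obj b) (f : H.obj x ⟶ z) : f = 0 := by
  classical
  exact DirectSum.eq_zero_of_surjective_of_notMem_range _ _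
    (starOutPush_surjective hF hG hcomm x b) (j := ⟨z, hb⟩)
    (fun ⟨y, hy⟩ => hz ⟨y.1, congrArg Subtype.val hy⟩) f

theorem hom_eq_zero_of_notMem_range_in (hF : IsCovering k F) (hG : IsCovering k G)
    (hcomm : H ⋙ G = F ⋙ J) (x : C) {z : D} (hz : z ∉ Set.range H.obj) {b : B}
    (hb : G.obj z = J.obj b) (f : z ⟶ H.obj x) : f = 0 := by
  classical
  exact DirectSum.eq_zero_of_surjective_of_notMem_range _ _
    (starInPush_surjective hF hG hcomm x b) (j := ⟨z, hb⟩)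
    (fun ⟨y, hy⟩ => hz ⟨y.1, congrArg Subtype.val hy⟩) f

end Stars

theorem IsCoveringMorphism.mem_range_iff_of_ne_zero {k : Type w} [CommRing k]
    {C : Type u} [Category.{v} C] [Preadditive C] [CategoryTheory.Linear k C]
    {B : Type u} [Category.{v} B] [Preadditive B] [CategoryTheory.Linear k B]
    {D : Type u} [Category.{v} D] [Preadditive D] [CategoryTheory.Linear k D]
    {F : C ⥤ B} {G : D ⥤ B} {H : C ⥤ D} {J : B ⥤ B} (hF : IsCovering k F)
    (hG : IsCovering k G) (hHJ : IsCoveringMorphism k F G H J) {a b : D} (f : a ⟶ b)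
    (hf : f ≠ 0) : a ∈ Set.range H.obj ↔ b ∈ Set.range H.obj := by
  obtain ⟨hH, hJ, ⟨Jinv, h₁, h₂⟩, hJobj, hcomm⟩ := hHJ
  have := hH.additive
  have := hJ.additive
  have := Functor.full_of_comp_eq_id h₁ h₂
  constructor
  · rintro ⟨x, rfl⟩
    by_contra hb
    exact hf (hom_eq_zero_of_notMem_range_out hF hG hcomm x hb (hJobj _).symm f)
  · rintro ⟨x, rfl⟩
    by_contra ha
    exact hf (hom_eq_zero_of_notMem_range_in hF hG hcomm x ha (hJobj _).symm f)

theorem galois_morphism_surjective_on_objects (k : Type w) [CommRing k]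
    {C : Type u} [Category.{v} C] [Preadditive C] [CategoryTheory.Linear k C]
    {B : Type u} [Category.{v} B] [Preadditive B] [CategoryTheory.Linear k B]
    {D : Type u} [Category.{v} D] [Preadditive D] [CategoryTheory.Linear k D]
    (F : C ⥤ B) (G : D ⥤ B) (hF : IsGaloisCovering k F) (hG : IsGaloisCovering k G)
    (H : C ⥤ D) (J : B ⥤ B) (hHJ : IsCoveringMorphism k F G H J) :
    Function.Surjective H.obj := by
  intro d
  obtain ⟨x, -⟩ := hF.1.snd.1 (G.obj d)
  exact hG.2.1.mem_of_mem (fun _ _ f hf => hHJ.mem_range_iff_of_ne_zero hF.1 hG.1 f hf)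
    ⟨x, rfl⟩ d
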